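/- Let μ_q < ν_q < μ_{q+1} be integers, W ∈ ℕ₊, and suppose the appearance alarm set interval is [μᴬ, νᴬ) and the disappearance inference uses delays μᵈ, νᵈ ∈ ℕ with k* = μ_q + μᵈ and k** = ν_q + νᵈ − μᵈ. If μᴬ ≤ k* < ν_q ≤ k** ≤ νᴬ, then νᴬ − μᴬ ≥ max{τᵒ + νᵈ − 2μᵈ, 1} where τᵒ = ν_q − μ_q, and also μ_q satisfies μᴬ − μᵈ ≤ μ_q ≤ νᴬ − μᵈ − 1. -/
import Mathlib


/-- from Theorems 3 and 4: with k* = μ_q + μᵈ and k** = ν_q + νᵈ − μᵈ,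
if μᴬ ≤ k* < ν_q ≤ k** ≤ νᴬ then νᴬ − μᴬ ≥ max{τᵒ + νᵈ − 2μᵈ, 1} (τᵒ = ν_q − μ_q)
and μᴬ − μᵈ ≤ μ_q ≤ νᴬ − μᵈ − 1. -/
theorem alarm_duration_and_inference_bounds
    (μq νq μq1 : ℤ) (hq : μq < νq) (hq1 : νq < μq1)
    (W : ℕ+) (μA νA : ℤ) (μd νd : ℕ)
    (kstar kstarstar : ℤ)
    (hk : kstar = μq + (μd : ℤ)) (hkk : kstarstar = νq + (νd : ℤ) - (μd : ℤ))
    (h1 : μA ≤ kstar) (h2 : kstar < νq) (h3 : νq ≤ kstarstar) (h4 : kstarstar ≤ νA) :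
    νA - μA ≥ max ((νq - μq) + (νd : ℤ) - 2 * (μd : ℤ)) 1 ∧
    μA - (μd : ℤ) ≤ μq ∧ μq ≤ νA - (μd : ℤ) - 1 := by
  subst hk hkk; refine ⟨max_le (by omega) (by omega), by omega, by omega⟩
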